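/- Let k, l be natural numbers and ∂₂ : ℂ^k → ℂ^{k+l}, ∂₁ : ℂ^{k+l} → ℂ^l linear maps with ∂₁ ∘ ∂₂ = 0. If J and J' are two subsets of Fin(k+l) of cardinality l such that the corresponding square submatrices ∂₁(J), ∂₂(J), ∂₁(J'), ∂₂(J') are all invertible, then |det ∂₂(J)| / |det ∂₁(J)| = |det ∂₂(J')| / |det ∂₁(J')|. -/

import Mathlib

/-!
Stack the rows of the identity indexed by `Jᶜ` on top of `∂₁` to get `P`, and put the columns of
the identity indexed by `J'` next to `∂₂` to get `Q`. As `∂₁ ∂₂ = 0`, `P Q` is block triangular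
with diagonal blocks `∂₂(J)` and `∂₁(J')`; after reordering columns of `P` and rows of `Q` along
the splittings `Jᶜ ⊔ J` and `J'ᶜ ⊔ J'`, `P` and `Q` are block triangular too, with determinants
`det ∂₁(J)` and `± det ∂₂(J')`. Hence `det ∂₂(J) · det ∂₁(J') = ± det ∂₁(J) · det ∂₂(J')`.
-/

open Matrix Equiv

namespace Matrix

variable {R ι m n : Type*} [CommRing R] [DecidableEq ι]
  [Fintype m] [DecidableEq m] [Fintype n] [DecidableEq n]

theorem det_fromRows_one_submatrix_submatrix (A : Matrix n ι R) (e : m ⊕ n ≃ ι) :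
    ((fromRows ((1 : Matrix ι ι R).submatrix (e ∘ Sum.inl) id) A).submatrix id e).det =
      (A.submatrix id (e ∘ Sum.inr)).det := by
  have hblocks : (fromRows ((1 : Matrix ι ι R).submatrix (e ∘ Sum.inl) id) A).submatrix id e =
      fromBlocks 1 0 (A.submatrix id (e ∘ Sum.inl)) (A.submatrix id (e ∘ Sum.inr)) := by
    ext (i | j) (i' | j') <;> simp [one_apply, e.injective.eq_iff]
  rw [hblocks, det_fromBlocks_zero₁₂, det_one, one_mul]

theorem det_fromCols_one_submatrix_submatrix (B : Matrix ι m R) (e : m ⊕ n ≃ ι) :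
    ((fromCols B ((1 : Matrix ι ι R).submatrix id (e ∘ Sum.inr))).submatrix e id).det =
      (B.submatrix (e ∘ Sum.inl) id).det := by
  have hblocks : (fromCols B ((1 : Matrix ι ι R).submatrix id (e ∘ Sum.inr))).submatrix e id =
      fromBlocks (B.submatrix (e ∘ Sum.inl) id) 0 (B.submatrix (e ∘ Sum.inr) id) 1 := by
    ext (i | j) (i' | j') <;> simp [one_apply, e.injective.eq_iff]
  rw [hblocks, det_fromBlocks_zero₁₂, det_one, mul_one]

theorem det_submatrix_mul_det_submatrix_of_mul_eq_zero [Fintype ι] {A : Matrix n ι R}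
    {B : Matrix ι m R} (hAB : A * B = 0) (e e' : m ⊕ n ≃ ι) :
    (B.submatrix (e ∘ Sum.inl) id).det * (A.submatrix id (e' ∘ Sum.inr)).det =
      Perm.sign (e.trans e'.symm) •
        ((A.submatrix id (e ∘ Sum.inr)).det * (B.submatrix (e' ∘ Sum.inl) id).det) := by
  set P := fromRows ((1 : Matrix ι ι R).submatrix (e ∘ Sum.inl) id) A
  set Q := fromCols B ((1 : Matrix ι ι R).submatrix id (e' ∘ Sum.inr))
  have hPQ : P * Q = fromBlocks (B.submatrix (e ∘ Sum.inl) id)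
      ((1 : Matrix ι ι R).submatrix (e ∘ Sum.inl) (e' ∘ Sum.inr)) 0
      (A.submatrix id (e' ∘ Sum.inr)) := by
    rw [fromRows_mul_fromCols, hAB]
    congr 1
    · exact one_submatrix_mul _ (Equiv.refl ι) B
    · exact mul_submatrix_one (Equiv.refl ι) _ _
    · exact mul_submatrix_one (Equiv.refl ι) _ A
  have hQ : Q.submatrix e id = (Q.submatrix e' id).submatrix (e.trans e'.symm) id := by
    ext; simp
  calc (B.submatrix (e ∘ Sum.inl) id).det * (A.submatrix id (e' ∘ Sum.inr)).det
      = (P * Q).det := by rw [hPQ, det_fromBlocks_zero₂₁]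
    _ = (P.submatrix id e * Q.submatrix e id).det := by rw [submatrix_mul_equiv, submatrix_id_id]
    _ = _ := by
      rw [det_mul, hQ, det_permute, det_fromRows_one_submatrix_submatrix,
        det_fromCols_one_submatrix_submatrix, Units.smul_def, zsmul_eq_mul]
      ring

end Matrix

/-- Its restrictions to `Sum.inl` and `Sum.inr` are definitionally the increasing enumerations
of `Jᶜ` and `J`. -/
def Finset.complSumEquiv {ι : Type*} [Fintype ι] [LinearOrder ι] {k l : ℕ} (J : Finset ι)
    (hJ : J.card = l) (hJc : Jᶜ.card = k) : Fin k ⊕ Fin l ≃ ι :=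
  (sumCongr ((Jᶜ.orderIsoOfFin hJc).toEquiv.trans (subtypeEquivRight fun _ => Finset.mem_compl))
    (J.orderIsoOfFin hJ).toEquiv).trans ((sumComm _ _).trans (sumCompl (· ∈ J)))

theorem stmt_11_general (k l : ℕ)
    (d2 : Matrix (Fin (k + l)) (Fin k) ℂ) (d1 : Matrix (Fin l) (Fin (k + l)) ℂ)
    (hcomp : d1 * d2 = 0)
    (J J' : Finset (Fin (k + l))) (hJ : J.card = l) (hJ' : J'.card = l)
    (hJc : Jᶜ.card = k) (hJ'c : J'ᶜ.card = k)
    (h1 : IsUnit (d1.submatrix id (fun i => ((J.orderIsoOfFin hJ) i : Fin (k + l)))))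
    (h1' : IsUnit (d1.submatrix id (fun i => ((J'.orderIsoOfFin hJ') i : Fin (k + l))))) :
    ‖(d2.submatrix (fun i => ((Jᶜ.orderIsoOfFin hJc) i : Fin (k + l))) id).det‖ /
        ‖(d1.submatrix id (fun i => ((J.orderIsoOfFin hJ) i : Fin (k + l)))).det‖ =
      ‖(d2.submatrix (fun i => ((J'ᶜ.orderIsoOfFin hJ'c) i : Fin (k + l))) id).det‖ /
        ‖(d1.submatrix id (fun i => ((J'.orderIsoOfFin hJ') i : Fin (k + l)))).det‖ := by
  have key := congrArg norm <| det_submatrix_mul_det_submatrix_of_mul_eq_zero hcomp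
    (J.complSumEquiv hJ hJc) (J'.complSumEquiv hJ' hJ'c)
  rw [norm_units_zsmul, norm_mul, norm_mul] at key
  have hdet1 := (isUnit_iff_isUnit_det _).mp h1
  have hdet1' := (isUnit_iff_isUnit_det _).mp h1'
  rw [div_eq_div_iff (norm_ne_zero_iff.mpr hdet1.ne_zero) (norm_ne_zero_iff.mpr hdet1'.ne_zero)]
  exact key.trans (mul_comm _ _)

theorem stmt_11 (k l : ℕ)
    (d2 : Matrix (Fin (k + l)) (Fin k) ℂ) (d1 : Matrix (Fin l) (Fin (k + l)) ℂ)
    (hcomp : d1 * d2 = 0)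
    (J J' : Finset (Fin (k + l))) (hJ : J.card = l) (hJ' : J'.card = l)
    (hJc : Jᶜ.card = k) (hJ'c : J'ᶜ.card = k)
    (h1 : IsUnit (d1.submatrix id (fun i => ((J.orderIsoOfFin hJ) i : Fin (k + l)))))
    (h2 : IsUnit (d2.submatrix (fun i => ((Jᶜ.orderIsoOfFin hJc) i : Fin (k + l))) id))
    (h1' : IsUnit (d1.submatrix id (fun i => ((J'.orderIsoOfFin hJ') i : Fin (k + l)))))
    (h2' : IsUnit (d2.submatrix (fun i => ((J'ᶜ.orderIsoOfFin hJ'c) i : Fin (k + l))) id)) :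
    ‖(d2.submatrix (fun i => ((Jᶜ.orderIsoOfFin hJc) i : Fin (k + l))) id).det‖ /
        ‖(d1.submatrix id (fun i => ((J.orderIsoOfFin hJ) i : Fin (k + l)))).det‖ =
      ‖(d2.submatrix (fun i => ((J'ᶜ.orderIsoOfFin hJ'c) i : Fin (k + l))) id).det‖ /
        ‖(d1.submatrix id (fun i => ((J'.orderIsoOfFin hJ') i : Fin (k + l)))).det‖ :=
  stmt_11_general k l d2 d1 hcomp J J' hJ hJ' hJc hJ'c h1 h1'
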